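/- arXiv:1808.01078 — 2 statements merged into one kernel-verified Lean document; each statement's English description precedes it below -/
import Mathlib

section
/- Let P be a regular n×n complex matrix polynomial of degree d, let ℓ ≥ 1 divide d, let ℒ(λ) be an (ε,n,η,n)-block Kronecker ℓ-ification of P built from a solution M(λ) of (Λ_η(λ^ℓ)^T ⊗ I_n) M(λ) (Λ_ε(λ^ℓ) ⊗ I_n) = P(λ), and let λ0 ∈ ℂ be a simple eigenvalue of P, i.e., a root of det P(λ) of multiplicity exactly 1. Let x, y ∈ ℂ^n be nonzero with P(λ0) x = 0 and y* P(λ0) = 0, and set z = H(λ0; ε, η, M) x and w = [Λ_η(conj(λ0)^ℓ) ⊗ I_n ; R_ε(conj(λ0)^ℓ) M(λ0)* (Λ_η(conj(λ0)^ℓ) ⊗ I_n)] y. Then z and w are nonzero, ℒ(λ0) z = 0, w* ℒ(λ0) = 0, and |w* ℒ′(λ0) z| = |y* P′(λ0) x|, where ℒ′ and P′ denote entrywise derivatives, (·)* the conjugate transpose, and conj(λ0) the complex conjugate of λ0. -/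
open Matrix BigOperators

noncomputable section

/-- Evaluation at `x` of the matrix polynomial with coefficients `C 0, …, C N`. -/
def mpEval {α β : Type*} (N : ℕ) (C : ℕ → Matrix α β ℂ) (x : ℂ) : Matrix α β ℂ :=
  ∑ i ∈ Finset.range (N + 1), x ^ i • C i

/-- Entrywise derivative of the matrix polynomial, evaluated at `x`. -/
def mpDer {α β : Type*} (N : ℕ) (C : ℕ → Matrix α β ℂ) (x : ℂ) : Matrix α β ℂ :=
  ∑ i ∈ Finset.range (N + 1), ((i : ℂ) * x ^ (i - 1)) • C i

/-- Spectral norm (operator 2-norm, i.e. largest singular value) of a complex matrix. -/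
def sNorm {α β : Type*} [Fintype α] [Fintype β] [DecidableEq β] (A : Matrix α β ℂ) : ℝ :=
  ‖LinearMap.toContinuousLinearMap (Matrix.toEuclideanLin A)‖

/-- Euclidean norm of a complex vector. -/
def vNorm {α : Type*} [Fintype α] (v : α → ℂ) : ℝ :=
  Real.sqrt (∑ i, ‖v i‖ ^ 2)

/-- `Λ_k(x^ℓ) ⊗ I_n`, a `(k+1)n × n` matrix whose `i`-th (0-based) `n × n` block is
`x^(ℓ(k−i)) I_n`. -/
def LamI (n k l : ℕ) (x : ℂ) : Matrix (Fin (k + 1) × Fin n) (Fin n) ℂ :=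
  Matrix.of fun p s => if p.2 = s then x ^ (l * (k - (p.1 : ℕ))) else 0

/-- `L_k(x^ℓ) ⊗ I_n`, a `kn × (k+1)n` matrix. -/
def LkI (n k l : ℕ) (x : ℂ) : Matrix (Fin k × Fin n) (Fin (k + 1) × Fin n) ℂ :=
  Matrix.of fun p q =>
    if p.2 = q.2 then
      if (q.1 : ℕ) = (p.1 : ℕ) then -1
      else if (q.1 : ℕ) = (p.1 : ℕ) + 1 then x ^ l else 0
    else 0

/-- The degree-`0` coefficient of `L_k(λ^ℓ) ⊗ I_n`. -/
def LkI0 (n k : ℕ) : Matrix (Fin k × Fin n) (Fin (k + 1) × Fin n) ℂ :=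
  Matrix.of fun p q => if p.2 = q.2 ∧ (q.1 : ℕ) = (p.1 : ℕ) then -1 else 0

/-- The degree-`ℓ` coefficient of `L_k(λ^ℓ) ⊗ I_n`. -/
def LkI1 (n k : ℕ) : Matrix (Fin k × Fin n) (Fin (k + 1) × Fin n) ℂ :=
  Matrix.of fun p q => if p.2 = q.2 ∧ (q.1 : ℕ) = (p.1 : ℕ) + 1 then 1 else 0

/-- `R_k(x^ℓ)`: `n × n` blocks `x^(ℓ(i−j)) I_n` for `j ≤ i` (0-based), `0` otherwise. -/
def Rmat (n k l : ℕ) (x : ℂ) : Matrix (Fin k × Fin n) (Fin (k + 1) × Fin n) ℂ :=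
  Matrix.of fun p q =>
    if p.2 = q.2 ∧ (q.1 : ℕ) ≤ (p.1 : ℕ) then x ^ (l * ((p.1 : ℕ) - (q.1 : ℕ))) else 0

/-- `S_k(x^ℓ)`: `n × n` blocks `x^(ℓ(k+i−j)) I_n` for `i < j` (0-based), `0` otherwise. -/
def Smat (n k l : ℕ) (x : ℂ) : Matrix (Fin k × Fin n) (Fin (k + 1) × Fin n) ℂ :=
  Matrix.of fun p q =>
    if p.2 = q.2 ∧ (p.1 : ℕ) < (q.1 : ℕ) then x ^ (l * (k + (p.1 : ℕ) - (q.1 : ℕ))) else 0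

/-- The block column `H(x; p, q, N) = [Λ_p(x^ℓ) ⊗ I_n ; R_q(x^ℓ) N(x) (Λ_p(x^ℓ) ⊗ I_n)]`. -/
def Hmat (n l p q : ℕ) (N : ℂ → Matrix (Fin (q + 1) × Fin n) (Fin (p + 1) × Fin n) ℂ)
    (x : ℂ) : Matrix ((Fin (p + 1) × Fin n) ⊕ (Fin q × Fin n)) (Fin n) ℂ :=
  Matrix.of fun r c =>
    Sum.elim (fun a => LamI n p l x a c)
      (fun a => (Rmat n q l x * (N x * LamI n p l x)) a c) r

/-- The block column `G(x; p, q, N) = [x^(qℓ)(Λ_p(x^ℓ) ⊗ I_n) ; −S_q(x^ℓ) N(x) (Λ_p(x^ℓ) ⊗ I_n)]`. -/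
def Gmat (n l p q : ℕ) (N : ℂ → Matrix (Fin (q + 1) × Fin n) (Fin (p + 1) × Fin n) ℂ)
    (x : ℂ) : Matrix ((Fin (p + 1) × Fin n) ⊕ (Fin q × Fin n)) (Fin n) ℂ :=
  Matrix.of fun r c =>
    Sum.elim (fun a => x ^ (q * l) * LamI n p l x a c)
      (fun a => (-(Smat n q l x * (N x * LamI n p l x))) a c) r

/-- Coefficients of the `(ε,n,η,n)`-block Kronecker `ℓ`-ification
`ℒ(λ) = [[M(λ), L_η(λ^ℓ)ᵀ ⊗ I_n], [L_ε(λ^ℓ) ⊗ I_n, 0]]`. -/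
def LcalCoef (n l ε η : ℕ)
    (M : ℕ → Matrix (Fin (η + 1) × Fin n) (Fin (ε + 1) × Fin n) ℂ) (i : ℕ) :
    Matrix ((Fin (η + 1) × Fin n) ⊕ (Fin ε × Fin n))
      ((Fin (ε + 1) × Fin n) ⊕ (Fin η × Fin n)) ℂ :=
  Matrix.fromBlocks (M i)
    (if i = 0 then (LkI0 n η)ᵀ else if i = l then (LkI1 n η)ᵀ else 0)
    (if i = 0 then LkI0 n ε else if i = l then LkI1 n ε else 0) 0

/-- `det P(λ)` as a scalar polynomial, where `P(λ) = Σ_{i=0}^d A_i λ^i`. -/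
def detPoly (n d : ℕ) (A : ℕ → Matrix (Fin n) (Fin n) ℂ) : Polynomial ℂ :=
  (∑ i ∈ Finset.range (d + 1), (Polynomial.X : Polynomial ℂ) ^ i • (A i).map Polynomial.C).det

/-- The horizontal concatenation `[A_0 A_1 ⋯ A_d]`. -/
def rowConcat (n d : ℕ) (A : ℕ → Matrix (Fin n) (Fin n) ℂ) :
    Matrix (Fin n) (Fin (d + 1) × Fin n) ℂ :=
  Matrix.of fun r q => A (q.1 : ℕ) r q.2

/-- Coefficientwise eigenvalue condition number of `Q(λ) = Σ_{i=0}^N C_i λ^i` at the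
eigentriple `(v, x0, u)`. -/
def coeffCond {α β : Type*} [Fintype α] [Fintype β] [DecidableEq β] (N : ℕ)
    (C : ℕ → Matrix α β ℂ) (x0 : ℂ) (u : β → ℂ) (v : α → ℂ) : ℝ :=
  (∑ i ∈ Finset.range (N + 1), ‖x0‖ ^ i * sNorm (C i)) * vNorm u * vNorm v /
    (‖x0‖ * ‖dotProduct (star v) ((mpDer N C x0).mulVec u)‖)

/-- Normwise eigenvalue condition number of `P(λ) = Σ_{i=0}^d A_i λ^i` at `(y, x0, x)`. -/
def normCond (n d : ℕ) (A : ℕ → Matrix (Fin n) (Fin n) ℂ) (x0 : ℂ)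
    (x y : Fin n → ℂ) : ℝ :=
  sNorm (rowConcat n d A) * (∑ i ∈ Finset.range (d + 1), ‖x0‖ ^ i) *
      vNorm x * vNorm y /
    (‖x0‖ * ‖dotProduct (star y) ((mpDer d A x0).mulVec x)‖)

/-- Each `n × n` block of each coefficient `M_t`, `t = 0, …, ℓ`, is `0`, `I_n`,
or one of the coefficients `A_s` of `P`.  -/
def IsCompanionM (n d l ε η : ℕ) (A : ℕ → Matrix (Fin n) (Fin n) ℂ)
    (M : ℕ → Matrix (Fin (η + 1) × Fin n) (Fin (ε + 1) × Fin n) ℂ) : Prop :=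
  ∀ t ≤ l, ∀ (i : Fin (η + 1)) (j : Fin (ε + 1)),
    (Matrix.of fun r s => M t (i, r) (j, s)) = 0 ∨
    (Matrix.of fun r s => M t (i, r) (j, s)) = (1 : Matrix (Fin n) (Fin n) ℂ) ∨
    ∃ s ≤ d, (Matrix.of fun r s' => M t (i, r) (j, s')) = A s

/-!
For every `λ` the block column `H(λ) = H(λ; ε, η, M)` satisfies
`ℒ(λ) H(λ) = [e_{η+1} ⊗ P(λ); 0]`: the lower block is `(L_ε ⊗ I_n)(Λ_ε ⊗ I_n) = 0`, and in the
upper block `(L_η ⊗ I_n)ᵀ R_η = e_{η+1} (Λ_η ⊗ I_n)ᵀ - I` turns `M Λ_ε + L_ηᵀ R_η M Λ_ε` into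
`e_{η+1} ⊗ Λ_ηᵀ M Λ_ε = e_{η+1} ⊗ P`. Applied to `x`, and to `ℒᵀ` (the same kind of pencil
with `Mᵀ`, `ε` and `η` swapped) for `ȳ`, this gives the two eigenvectors; their last block is
`x` resp. `y`, so they are nonzero.

Differentiating the identity gives `ℒ' H + ℒ H' = [e_{η+1} ⊗ P'; 0]`. Multiplying by `w*` on the
left kills `ℒ(λ₀) H'(λ₀)`, whatever `H'` is, and `w* [e_{η+1} ⊗ P'(λ₀); 0] = y* P'(λ₀)` since the
last block of `Λ_η` is `I_n`. So even `w* ℒ'(λ₀) z = y* P'(λ₀) x` holds.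
-/

theorem pow_mul_of_add_one_eq {M : Type*} [Monoid M] (x : M) {l a b : ℕ} (h : b + 1 = a) :
    x ^ l * x ^ (l * b) = x ^ (l * a) := by
  rw [← h, ← pow_add, Nat.mul_succ, add_comm]

/-- `e_{k+1} ⊗ I_n`. -/
def lastBlockI (n k : ℕ) : Matrix (Fin (k + 1) × Fin n) (Fin n) ℂ :=
  Matrix.of fun p s => if p.1 = Fin.last k ∧ p.2 = s then 1 else 0

section KroneckerBlocks

variable (n k l : ℕ) (x : ℂ)

theorem LkI_mul_LamI : LkI n k l x * LamI n k l x = 0 := by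
  ext ⟨i, r⟩ c
  simp only [mul_apply, LkI, LamI, of_apply, Fintype.sum_prod_type, ite_mul, zero_mul, mul_ite,
    mul_zero, Matrix.zero_apply, Finset.sum_ite_eq', Finset.mem_univ, if_true]
  rcases eq_or_ne r c with rfl | hrc
  · simp only [if_true, neg_one_mul]
    have hsummand : ∀ j : ℕ, (if j = (i : ℕ) then -x ^ (l * (k - j))
        else if j = i + 1 then x ^ l * x ^ (l * (k - j)) else 0) =
        (if j = (i : ℕ) then -x ^ (l * (k - i)) else 0) +
          if j = i + 1 then x ^ (l * (k - i)) else 0 := by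
      intro j
      split_ifs <;> subst_vars <;> (try simp) <;>
        first | omega | exact pow_mul_of_add_one_eq x (by omega)
    rw [Fin.sum_univ_eq_sum_range (fun j => if j = (i : ℕ) then -x ^ (l * (k - j))
        else if j = i + 1 then x ^ l * x ^ (l * (k - j)) else 0),
      Finset.sum_congr rfl fun j _ => hsummand j, Finset.sum_add_distrib, Finset.sum_ite_eq',
      Finset.sum_ite_eq']
    simp [i.isLt]
  · simp [hrc]

theorem transpose_LamI_mul_lastBlockI : (LamI n k l x)ᵀ * lastBlockI n k = 1 := by
  ext r s
  simp [mul_apply, LamI, lastBlockI, Fintype.sum_prod_type, Matrix.one_apply, ite_and]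
  exact if_congr eq_comm rfl rfl

theorem transpose_LkI_mul_Rmat :
    (LkI n k l x)ᵀ * Rmat n k l x = lastBlockI n k * (LamI n k l x)ᵀ - 1 := by
  ext ⟨i, r⟩ ⟨j, s⟩
  simp only [mul_apply, transpose_apply, LkI, Rmat, LamI, lastBlockI, of_apply, Matrix.sub_apply,
    Matrix.one_apply, Fintype.sum_prod_type, ite_mul, zero_mul, mul_ite, mul_zero, ite_and]
  rcases eq_or_ne r s with rfl | hrs
  · simp only [neg_mul, one_mul, Finset.sum_ite_eq', Finset.mem_univ, ↓reduceIte,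
      Finset.sum_ite_eq, Prod.mk.injEq, and_true]
    have hsummand : ∀ p : ℕ, (if (j : ℕ) ≤ p then
          (if (i : ℕ) = p then -x ^ (l * (p - j))
            else if (i : ℕ) = p + 1 then x ^ l * x ^ (l * (p - j)) else 0)
          else 0) = (if p = i then (if (j : ℕ) ≤ i then -x ^ (l * (i - j)) else 0) else 0) +
            (if p + 1 = i then (if (j : ℕ) < i then x ^ (l * (i - j)) else 0) else 0) := by
      intro p
      split_ifs <;> subst_vars <;> (try simp) <;>
        first | omega | exact pow_mul_of_add_one_eq x (by omega)
    rw [Fin.sum_univ_eq_sum_range (fun p => if (j : ℕ) ≤ p then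
          (if (i : ℕ) = p then -x ^ (l * (p - j))
            else if (i : ℕ) = p + 1 then x ^ l * x ^ (l * (p - j)) else 0)
          else 0),
      Finset.sum_congr rfl fun p _ => hsummand p, Finset.sum_add_distrib, Finset.sum_ite_eq']
    simp only [Fin.ext_iff, Fin.val_last]
    obtain ⟨a, ha⟩ := i
    obtain ⟨b, hb⟩ := j
    cases a <;> simp <;> split_ifs <;> subst_vars <;> (try simp) <;> (exfalso; omega)
  · simp [hrs, hrs.symm]

end KroneckerBlocks

section Hmat

variable {n l p q : ℕ}

theorem Hmat_eq_fromRows (N : ℂ → Matrix (Fin (q + 1) × Fin n) (Fin (p + 1) × Fin n) ℂ) (x : ℂ) :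
    Hmat n l p q N x = fromRows (LamI n p l x) (Rmat n q l x * (N x * LamI n p l x)) := by
  ext (_ | _) _ <;> rfl

theorem fromBlocks_mul_Hmat (N : ℂ → Matrix (Fin (q + 1) × Fin n) (Fin (p + 1) × Fin n) ℂ)
    (x : ℂ) :
    fromBlocks (N x) (LkI n q l x)ᵀ (LkI n p l x) 0 * Hmat n l p q N x =
      fromRows (lastBlockI n q * ((LamI n q l x)ᵀ * N x * LamI n p l x)) 0 := by
  rw [Hmat_eq_fromRows, fromBlocks_mul_fromRows, LkI_mul_LamI, ← Matrix.mul_assoc,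
    transpose_LkI_mul_Rmat, Matrix.sub_mul, Matrix.one_mul, Matrix.zero_mul, add_zero,
    add_sub_cancel]
  simp only [Matrix.mul_assoc]

theorem fromBlocks_mulVec_Hmat_mulVec_eq_zero
    (N : ℂ → Matrix (Fin (q + 1) × Fin n) (Fin (p + 1) × Fin n) ℂ) (x : ℂ) {v : Fin n → ℂ}
    (hv : ((LamI n q l x)ᵀ * N x * LamI n p l x) *ᵥ v = 0) :
    fromBlocks (N x) (LkI n q l x)ᵀ (LkI n p l x) 0 *ᵥ (Hmat n l p q N x *ᵥ v) = 0 := by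
  rw [mulVec_mulVec, fromBlocks_mul_Hmat, fromRows_mulVec, ← mulVec_mulVec, hv, mulVec_zero,
    zero_mulVec]
  exact Sum.elim_zero_zero

theorem Hmat_mulVec_dotProduct_fromRows_lastBlockI
    (N : ℂ → Matrix (Fin (q + 1) × Fin n) (Fin (p + 1) × Fin n) ℂ) (x : ℂ)
    {m : Type*} [Fintype m] (B : Matrix (Fin n) m ℂ) (u : Fin n → ℂ) (v : m → ℂ) :
    (Hmat n l p q N x *ᵥ u) ⬝ᵥ (fromRows (lastBlockI n p * B) 0 *ᵥ v) = u ⬝ᵥ (B *ᵥ v) := by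
  rw [Hmat_eq_fromRows, fromRows_mulVec, fromRows_mulVec, sumElim_dotProduct_sumElim,
    zero_mulVec, dotProduct_zero, add_zero, dotProduct_comm, dotProduct_mulVec,
    ← mulVec_transpose, mulVec_mulVec, ← Matrix.mul_assoc, transpose_LamI_mul_lastBlockI,
    Matrix.one_mul, dotProduct_comm]

theorem Hmat_mulVec_ne_zero (N : ℂ → Matrix (Fin (q + 1) × Fin n) (Fin (p + 1) × Fin n) ℂ)
    (x : ℂ) {u : Fin n → ℂ} (hu : u ≠ 0) : Hmat n l p q N x *ᵥ u ≠ 0 := by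
  intro h
  apply hu
  funext r
  have h1 := Hmat_mulVec_dotProduct_fromRows_lastBlockI (l := l) N x 1 u (Pi.single r 1)
  rwa [h, zero_dotProduct, one_mulVec, dotProduct_single, mul_one, eq_comm] at h1

end Hmat

section Conj

variable {n l p q : ℕ}

theorem conjTranspose_LamI_conj (k : ℕ) (x : ℂ) :
    (LamI n k l (starRingEnd ℂ x))ᴴ = (LamI n k l x)ᵀ := by
  ext
  simp [LamI, apply_ite (star : ℂ → ℂ)]

theorem conjTranspose_Rmat_conj (k : ℕ) (x : ℂ) :
    (Rmat n k l (starRingEnd ℂ x))ᴴ = (Rmat n k l x)ᵀ := by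
  ext
  simp [Rmat, apply_ite (star : ℂ → ℂ)]

theorem star_Hmat_mulVec (W : Matrix (Fin (p + 1) × Fin n) (Fin (q + 1) × Fin n) ℂ) (x : ℂ)
    (v : Fin n → ℂ) :
    star (Hmat n l p q (fun _ => Wᴴ) (starRingEnd ℂ x) *ᵥ v) =
      Hmat n l p q (fun _ => Wᵀ) x *ᵥ star v := by
  rw [star_mulVec, ← mulVec_transpose, Hmat_eq_fromRows, Hmat_eq_fromRows,
    conjTranspose_fromRows_eq_fromCols_conjTranspose, transpose_fromCols]
  simp only [conjTranspose_mul, conjTranspose_conjTranspose, conjTranspose_LamI_conj,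
    conjTranspose_Rmat_conj, transpose_mul, transpose_transpose, Matrix.mul_assoc]

end Conj

section MatrixPolynomial

variable {α β γ δ : Type*}

theorem mpEval_fromBlocks (N : ℕ) (A : ℕ → Matrix α γ ℂ) (B : ℕ → Matrix α δ ℂ)
    (C : ℕ → Matrix β γ ℂ) (D : ℕ → Matrix β δ ℂ) (x : ℂ) :
    mpEval N (fun i => fromBlocks (A i) (B i) (C i) (D i)) x =
      fromBlocks (mpEval N A x) (mpEval N B x) (mpEval N C x) (mpEval N D x) := by
  ext (_ | _) (_ | _) <;> simp [mpEval, Matrix.sum_apply]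

theorem mpEval_ite_zero_ite {l : ℕ} (hl : l ≠ 0) (C₀ C₁ : Matrix α β ℂ) (x : ℂ) :
    mpEval l (fun i => if i = 0 then C₀ else if i = l then C₁ else 0) x = C₀ + x ^ l • C₁ := by
  have hsummand : ∀ i, x ^ i • (if i = 0 then C₀ else if i = l then C₁ else 0) =
      (if i = 0 then C₀ else 0) + if i = l then x ^ l • C₁ else 0 := by
    intro i
    split_ifs <;> subst_vars <;> simp_all
  simp [mpEval, hsummand, Finset.sum_add_distrib]

theorem LkI_eq_add (n k l : ℕ) (x : ℂ) : LkI n k l x = LkI0 n k + x ^ l • LkI1 n k := by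
  ext
  simp only [LkI, LkI0, LkI1, of_apply, Matrix.add_apply, Matrix.smul_apply, smul_eq_mul]
  split_ifs <;> first | omega | simp_all

theorem mpEval_LcalCoef {n l : ℕ} (ε η : ℕ) (hl : l ≠ 0)
    (M : ℕ → Matrix (Fin (η + 1) × Fin n) (Fin (ε + 1) × Fin n) ℂ) (x : ℂ) :
    mpEval l (LcalCoef n l ε η M) x =
      fromBlocks (mpEval l M x) (LkI n η l x)ᵀ (LkI n ε l x) 0 := by
  unfold LcalCoef
  rw [mpEval_fromBlocks, mpEval_ite_zero_ite hl, mpEval_ite_zero_ite hl, LkI_eq_add,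
    LkI_eq_add, transpose_add, transpose_smul]
  simp [mpEval]

end MatrixPolynomial

def HasEntrywiseDerivAt {𝕜 m n : Type*} [NontriviallyNormedField 𝕜] (F : 𝕜 → Matrix m n 𝕜)
    (F' : Matrix m n 𝕜) (x : 𝕜) : Prop :=
  ∀ i j, HasDerivAt (fun t => F t i j) (F' i j) x

namespace HasEntrywiseDerivAt

variable {𝕜 m n o m' : Type*} [NontriviallyNormedField 𝕜] {F : 𝕜 → Matrix m n 𝕜}
  {F' : Matrix m n 𝕜} {x : 𝕜}

theorem unique {F'' : Matrix m n 𝕜} (h₁ : HasEntrywiseDerivAt F F' x)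
    (h₂ : HasEntrywiseDerivAt F F'' x) : F' = F'' :=
  Matrix.ext fun i j => (h₁ i j).unique (h₂ i j)

theorem mul [Fintype n] {G : 𝕜 → Matrix n o 𝕜} {G' : Matrix n o 𝕜}
    (hF : HasEntrywiseDerivAt F F' x) (hG : HasEntrywiseDerivAt G G' x) :
    HasEntrywiseDerivAt (fun t => F t * G t) (F' * G x + F x * G') x := by
  intro i j
  simp only [mul_apply, Matrix.add_apply, ← Finset.sum_add_distrib]
  exact HasDerivAt.fun_sum fun k _ => (hF i k).mul (hG k j)

theorem const_mul [Fintype m] (A : Matrix m' m 𝕜) (hF : HasEntrywiseDerivAt F F' x) :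
    HasEntrywiseDerivAt (fun t => A * F t) (A * F') x := by
  intro i j
  simp only [mul_apply]
  exact HasDerivAt.fun_sum fun k _ => (hF k j).const_mul (A i k)

theorem fromRows {G : 𝕜 → Matrix m' n 𝕜} {G' : Matrix m' n 𝕜}
    (hF : HasEntrywiseDerivAt F F' x) (hG : HasEntrywiseDerivAt G G' x) :
    HasEntrywiseDerivAt (fun t => Matrix.fromRows (F t) (G t)) (Matrix.fromRows F' G') x := by
  rintro (i | i) j
  exacts [hF i j, hG i j]

end HasEntrywiseDerivAt

theorem hasEntrywiseDerivAt_const {𝕜 m n : Type*} [NontriviallyNormedField 𝕜]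
    (A : Matrix m n 𝕜) (x : 𝕜) :
    HasEntrywiseDerivAt (fun _ => A) 0 x :=
  fun i j => hasDerivAt_const x (A i j)

theorem hasEntrywiseDerivAt_mpEval {α β : Type*} (N : ℕ) (C : ℕ → Matrix α β ℂ) (x : ℂ) :
    HasEntrywiseDerivAt (mpEval N C) (mpDer N C x) x := by
  intro i j
  simp only [mpEval, mpDer, Matrix.sum_apply, Matrix.smul_apply, smul_eq_mul]
  exact HasDerivAt.fun_sum fun k _ => (hasDerivAt_pow k x).mul_const (C k i j)

theorem hasEntrywiseDerivAt_ite_pow {𝕜 m n : Type*} [NontriviallyNormedField 𝕜]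
    (c : m → n → Prop) [∀ i j, Decidable (c i j)] (e : m → n → ℕ) (x : 𝕜) :
    HasEntrywiseDerivAt (fun t => Matrix.of fun i j => if c i j then t ^ e i j else 0)
      (Matrix.of fun i j => if c i j then (e i j : 𝕜) * x ^ (e i j - 1) else 0) x := by
  intro i j
  simp only [of_apply]
  split_ifs
  exacts [hasDerivAt_pow _ x, hasDerivAt_const x 0]

theorem exists_hasEntrywiseDerivAt_Hmat {n l p q : ℕ}
    {N : ℂ → Matrix (Fin (q + 1) × Fin n) (Fin (p + 1) × Fin n) ℂ}
    {N' : Matrix (Fin (q + 1) × Fin n) (Fin (p + 1) × Fin n) ℂ} {x : ℂ}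
    (hN : HasEntrywiseDerivAt N N' x) : ∃ H', HasEntrywiseDerivAt (Hmat n l p q N) H' x := by
  have hLam := hasEntrywiseDerivAt_ite_pow (fun (i : Fin (p + 1) × Fin n) j => i.2 = j)
    (fun i _ => l * (p - (i.1 : ℕ))) x
  have hR := hasEntrywiseDerivAt_ite_pow
    (fun (i : Fin q × Fin n) (j : Fin (q + 1) × Fin n) => i.2 = j.2 ∧ (j.1 : ℕ) ≤ i.1)
    (fun i j => l * ((i.1 : ℕ) - j.1)) x
  rw [show Hmat n l p q N = fun t => fromRows (LamI n p l t) (Rmat n q l t * (N t * LamI n p l t))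
      from funext fun t => Hmat_eq_fromRows N t]
  exact ⟨_, hLam.fromRows (hR.mul (hN.mul hLam))⟩

theorem dotProduct_mulVec_deriv_of_mul_eq {𝕜 a b c : Type*} [NontriviallyNormedField 𝕜]
    [Fintype a] [Fintype b] [Fintype c]
    {F : 𝕜 → Matrix a b 𝕜} {G : 𝕜 → Matrix b c 𝕜} {K : 𝕜 → Matrix a c 𝕜}
    {F' : Matrix a b 𝕜} {G' : Matrix b c 𝕜} {K' : Matrix a c 𝕜} {x : 𝕜}
    (hFG : ∀ t, F t * G t = K t) (hF : HasEntrywiseDerivAt F F' x)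
    (hG : HasEntrywiseDerivAt G G' x) (hK : HasEntrywiseDerivAt K K' x)
    {u : a → 𝕜} (hu : u ᵥ* F x = 0) (v : c → 𝕜) :
    u ⬝ᵥ (F' *ᵥ (G x *ᵥ v)) = u ⬝ᵥ (K' *ᵥ v) := by
  rw [← funext hFG] at hK
  rw [← (hF.mul hG).unique hK, add_mulVec, dotProduct_add, ← mulVec_mulVec, ← mulVec_mulVec,
    dotProduct_mulVec u (F x), hu, zero_dotProduct, add_zero]

theorem stmt13_general (n d l ε η : ℕ) (hl : 1 ≤ l)
    (A : ℕ → Matrix (Fin n) (Fin n) ℂ)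
    (M : ℕ → Matrix (Fin (η + 1) × Fin n) (Fin (ε + 1) × Fin n) ℂ)
    (hM : ∀ x : ℂ, (LamI n η l x)ᵀ * mpEval l M x * LamI n ε l x = mpEval d A x)
    (lam0 : ℂ)
    (x y : Fin n → ℂ) (hx : x ≠ 0) (hy : y ≠ 0)
    (hPx : (mpEval d A lam0).mulVec x = 0)
    (hPy : (mpEval d A lam0).vecMul (star y) = 0)
    (z : ((Fin (ε + 1) × Fin n) ⊕ (Fin η × Fin n)) → ℂ)
    (w : ((Fin (η + 1) × Fin n) ⊕ (Fin ε × Fin n)) → ℂ)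
    (hz : z = (Hmat n l ε η (mpEval l M) lam0).mulVec x)
    (hw : w = (Hmat n l η ε (fun _ => (mpEval l M lam0)ᴴ)
                (starRingEnd ℂ lam0)).mulVec y) :
    z ≠ 0 ∧ w ≠ 0 ∧
      (mpEval l (LcalCoef n l ε η M) lam0).mulVec z = 0 ∧
      (mpEval l (LcalCoef n l ε η M) lam0).vecMul (star w) = 0 ∧
      ‖dotProduct (star w) ((mpDer l (LcalCoef n l ε η M) lam0).mulVec z)‖ =
        ‖dotProduct (star y) ((mpDer d A lam0).mulVec x)‖ := by
  have hl0 : l ≠ 0 := by omega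
  have hsw : star w = Hmat n l η ε (fun _ => (mpEval l M lam0)ᵀ) lam0 *ᵥ star y := by
    rw [hw, star_Hmat_mulVec]
  have hPT : (LamI n ε l lam0)ᵀ * (mpEval l M lam0)ᵀ * LamI n η l lam0 = (mpEval d A lam0)ᵀ := by
    rw [← hM, transpose_mul, transpose_mul, transpose_transpose, Matrix.mul_assoc]
  have hleft : star w ᵥ* mpEval l (LcalCoef n l ε η M) lam0 = 0 := by
    rw [← mulVec_transpose, mpEval_LcalCoef ε η hl0, fromBlocks_transpose, transpose_zero,
      transpose_transpose, hsw]
    exact fromBlocks_mulVec_Hmat_mulVec_eq_zero (fun _ => (mpEval l M lam0)ᵀ) lam0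
      (by rw [hPT, mulVec_transpose, hPy])
  have hLH : ∀ t, mpEval l (LcalCoef n l ε η M) t * Hmat n l ε η (mpEval l M) t =
      fromRows (lastBlockI n η * mpEval d A t) 0 := fun t => by
    rw [mpEval_LcalCoef ε η hl0, fromBlocks_mul_Hmat, hM]
  obtain ⟨H', hH'⟩ :=
    exists_hasEntrywiseDerivAt_Hmat (l := l) (hasEntrywiseDerivAt_mpEval l M lam0)
  have hder := dotProduct_mulVec_deriv_of_mul_eq hLH (hasEntrywiseDerivAt_mpEval l _ lam0) hH'
    (((hasEntrywiseDerivAt_mpEval d A lam0).const_mul (lastBlockI n η)).fromRows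
      (hasEntrywiseDerivAt_const 0 lam0)) hleft x
  refine ⟨hz ▸ Hmat_mulVec_ne_zero _ _ hx, hw ▸ Hmat_mulVec_ne_zero _ _ hy, ?_, hleft, ?_⟩
  · rw [mpEval_LcalCoef ε η hl0, hz]
    exact fromBlocks_mulVec_Hmat_mulVec_eq_zero (mpEval l M) lam0 (by rw [hM, hPx])
  · rw [hz, hder, hsw, Hmat_mulVec_dotProduct_fromRows_lastBlockI]

/-- For a simple eigenvalue `lam0` of `P` with right/left eigenvectors `x`, `y`, the
vectors `z = H(lam0; ε, η, M) x` and
`w = [Λ_η(conj lam0 ^ ℓ) ⊗ I_n ; R_ε(conj lam0 ^ ℓ) M(lam0)* (Λ_η(conj lam0 ^ ℓ) ⊗ I_n)] y`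
are right/left eigenvectors of `ℒ` with eigenvalue `lam0`, and
`|w* ℒ′(lam0) z| = |y* P′(lam0) x|`. -/
theorem stmt13 (n d l ε η : ℕ) (hn : 0 < n) (hl : 1 ≤ l) (hd : d = l * (ε + η + 1))
    (A : ℕ → Matrix (Fin n) (Fin n) ℂ) (hdeg : A d ≠ 0)
    (hreg : detPoly n d A ≠ 0)
    (M : ℕ → Matrix (Fin (η + 1) × Fin n) (Fin (ε + 1) × Fin n) ℂ)
    (hM : ∀ x : ℂ, (LamI n η l x)ᵀ * mpEval l M x * LamI n ε l x = mpEval d A x)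
    (lam0 : ℂ) (hsimple : (detPoly n d A).rootMultiplicity lam0 = 1)
    (x y : Fin n → ℂ) (hx : x ≠ 0) (hy : y ≠ 0)
    (hPx : (mpEval d A lam0).mulVec x = 0)
    (hPy : (mpEval d A lam0).vecMul (star y) = 0)
    (z : ((Fin (ε + 1) × Fin n) ⊕ (Fin η × Fin n)) → ℂ)
    (w : ((Fin (η + 1) × Fin n) ⊕ (Fin ε × Fin n)) → ℂ)
    (hz : z = (Hmat n l ε η (mpEval l M) lam0).mulVec x)
    (hw : w = (Hmat n l η ε (fun _ => (mpEval l M lam0)ᴴ)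
                (starRingEnd ℂ lam0)).mulVec y) :
    z ≠ 0 ∧ w ≠ 0 ∧
      (mpEval l (LcalCoef n l ε η M) lam0).mulVec z = 0 ∧
      (mpEval l (LcalCoef n l ε η M) lam0).vecMul (star w) = 0 ∧
      ‖dotProduct (star w) ((mpDer l (LcalCoef n l ε η M) lam0).mulVec z)‖ =
        ‖dotProduct (star y) ((mpDer d A lam0).mulVec x)‖ :=
  stmt13_general n d l ε η hl A M hM lam0 x y hx hy hPx hPy z w hz hw

end
end

section
/- Let P(λ) = Σ_{i=0}^d A_i λ^i be an n×n complex matrix polynomial of degree d, let ℓ ≥ 1 and ε, η ≥ 0 be integers with d = ℓ(ε+η+1), and let M(λ) = Σ_{i=0}^ℓ M_i λ^i ∈ ℂ[λ]^{(η+1)n×(ε+1)n} satisfy (Λ_η(λ^ℓ)^T ⊗ I_n) M(λ) (Λ_ε(λ^ℓ) ⊗ I_n) = P(λ). Then max_{0≤i≤ℓ} ‖M_i‖₂ ≥ max_{0≤i≤d} ‖A_i‖₂ / (2 · max{ε+1, η+1}). -/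
open Matrix BigOperators

noncomputable section

/-! Multiplying out, block `(i, j)` of `M_t` contributes only to the coefficient of
`λ ^ (ℓ(η - i) + ℓ(ε - j) + t)`, so every `A_s` is a sum of blocks of the `M_t`, each of spectral
norm at most `‖M_t‖₂`. For fixed `i` and `0 ≤ t ≤ ℓ`, that exponent determines `(j, t)` up to the
ambiguity between `t = 0` and `t = ℓ`, so at most `2(η + 1)` blocks contribute to each `A_s`. -/

open scoped Matrix.Norms.L2Operator

namespace Matrix

variable {𝕜 : Type*} [RCLike 𝕜] {m n m' n' : Type*} [Fintype m] [Fintype n] [Fintype m']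
  [Fintype n'] [DecidableEq m] [DecidableEq n] [DecidableEq m'] [DecidableEq n']

lemma l2_opNorm_le_one_of_mul_conjTranspose_eq_one {P : Matrix m' m 𝕜} (hP : P * Pᴴ = 1) :
    ‖P‖ ≤ 1 := by
  have h := l2_opNorm_conjTranspose_mul_self Pᴴ
  rw [conjTranspose_conjTranspose, hP, l2_opNorm_conjTranspose, ← diagonal_one,
    l2_opNorm_diagonal] at h
  have h1 : ‖fun _ : m' => (1 : 𝕜)‖ ≤ 1 :=
    (pi_norm_le_iff_of_nonneg zero_le_one).mpr fun _ => by simp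
  nlinarith [norm_nonneg P]

lemma l2_opNorm_one_submatrix_le {e : m' → m} (he : Function.Injective e) :
    ‖(1 : Matrix m m 𝕜).submatrix e id‖ ≤ 1 := by
  refine l2_opNorm_le_one_of_mul_conjTranspose_eq_one ?_
  ext a b
  simp [mul_apply, one_apply, he.eq_iff]

lemma l2_opNorm_submatrix_le (A : Matrix m n 𝕜) {f : m' → m} {g : n' → n}
    (hf : Function.Injective f) (hg : Function.Injective g) : ‖A.submatrix f g‖ ≤ ‖A‖ := by
  have hA : A.submatrix f g = (1 : Matrix m m 𝕜).submatrix f id * A *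
      ((1 : Matrix n n 𝕜).submatrix g id)ᴴ := by
    ext a b
    simp [mul_apply, one_apply]
  calc ‖A.submatrix f g‖
      ≤ ‖(1 : Matrix m m 𝕜).submatrix f id‖ * ‖A‖ * ‖((1 : Matrix n n 𝕜).submatrix g id)ᴴ‖ := by
        rw [hA]
        exact (l2_opNorm_mul _ _).trans
          (mul_le_mul_of_nonneg_right (l2_opNorm_mul _ _) (norm_nonneg _))
    _ ≤ 1 * ‖A‖ * 1 := by
        rw [l2_opNorm_conjTranspose]
        gcongr
        exacts [l2_opNorm_one_submatrix_le hf, l2_opNorm_one_submatrix_le hg]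
    _ = ‖A‖ := by ring

end Matrix

lemma Polynomial.coeff_eq_sum_filter_of_forall_eval_eq {R ι : Type*} [CommRing R] [IsDomain R]
    [Infinite R] (N : ℕ) (a : ℕ → R) (S : Finset ι) (e : ι → ℕ) (b : ι → R)
    (h : ∀ x : R, ∑ k ∈ Finset.range (N + 1), a k * x ^ k = ∑ p ∈ S, b p * x ^ e p)
    {s : ℕ} (hs : s ≤ N) : a s = ∑ p ∈ S with e p = s, b p := by
  have hpoly : ∑ k ∈ Finset.range (N + 1), Polynomial.C (a k) * Polynomial.X ^ k =
      ∑ p ∈ S, Polynomial.C (b p) * Polynomial.X ^ e p :=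
    Polynomial.funext fun x => by simpa [Polynomial.eval_finsetSum] using h x
  have hcoeff := congrArg (Polynomial.coeff · s) hpoly
  simpa [Polynomial.finsetSum_coeff, Polynomial.coeff_C_mul_X_pow, Finset.sum_ite_eq',
    Nat.lt_succ_of_le hs, Finset.sum_filter, eq_comm] using hcoeff

lemma Nat.eq_and_eq_of_mul_add_eq_mul_add {l a b t u : ℕ} (hl : 0 < l) (ht : t ≤ l)
    (hu : u ≤ l) (htu : t = l ↔ u = l) (h : l * a + t = l * b + u) : a = b ∧ t = u := by
  rcases ht.lt_or_eq with ht | rfl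
  · have hu' : u < l := lt_of_le_of_ne hu fun hul => ht.ne (htu.mpr hul)
    have hdiv := congrArg (· / l) h
    have hmod := congrArg (· % l) h
    simp only [Nat.mul_add_div hl, Nat.div_eq_of_lt ht, Nat.div_eq_of_lt hu', Nat.mul_add_mod,
      Nat.mod_eq_of_lt ht, Nat.mod_eq_of_lt hu'] at hdiv hmod
    omega
  · obtain rfl := htu.mp rfl
    exact ⟨Nat.eq_of_mul_eq_mul_left hl (by omega), rfl⟩

section KroneckerBlocks

variable (l ε η : ℕ)

def blockDegree (p : Fin (η + 1) × Fin (ε + 1) × ℕ) : ℕ :=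
  l * (η - p.1) + l * (ε - p.2.1) + p.2.2

def blockIndices : Finset (Fin (η + 1) × Fin (ε + 1) × ℕ) :=
  Finset.univ ×ˢ Finset.univ ×ˢ Finset.range (l + 1)

def blockFiber (s : ℕ) : Finset (Fin (η + 1) × Fin (ε + 1) × ℕ) :=
  (blockIndices l ε η).filter (blockDegree l ε η · = s)

lemma lamI_transpose_mul_mpEval_mul_lamI_apply {n : ℕ}
    (M : ℕ → Matrix (Fin (η + 1) × Fin n) (Fin (ε + 1) × Fin n) ℂ) (x : ℂ) (r c : Fin n) :
    ((LamI n η l x)ᵀ * mpEval l M x * LamI n ε l x) r c =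
      ∑ p ∈ blockIndices l ε η, M p.2.2 (p.1, r) (p.2.1, c) * x ^ blockDegree l ε η p := by
  simp only [blockIndices, blockDegree, Finset.sum_product, Matrix.mul_apply,
    Matrix.transpose_apply, LamI, Matrix.of_apply, mpEval, Matrix.sum_apply, Matrix.smul_apply,
    smul_eq_mul, Fintype.sum_prod_type, ite_mul, mul_ite, zero_mul, mul_zero,
    Finset.sum_ite_eq', Finset.mem_univ, if_true, Finset.sum_mul, Finset.mul_sum]
  rw [Finset.sum_comm]
  refine Finset.sum_congr rfl fun i _ => Finset.sum_congr rfl fun j _ => ?_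
  rw [Finset.sum_comm]
  simp only [Finset.sum_ite_eq', Finset.mem_univ, if_true]
  refine Finset.sum_congr rfl fun t _ => ?_
  ring


lemma card_blockFiber_le (hl : 0 < l) (s : ℕ) :
    (blockFiber l ε η s).card ≤ 2 * (η + 1) := by
  have hinj : Set.InjOn (fun p : Fin (η + 1) × Fin (ε + 1) × ℕ => (p.1, decide (p.2.2 = l)))
      (blockFiber l ε η s) := by
    intro p hp q hq hpq
    replace hp := Finset.mem_filter.mp (Finset.mem_coe.mp hp)
    replace hq := Finset.mem_filter.mp (Finset.mem_coe.mp hq)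
    obtain ⟨i, j, t⟩ := p
    obtain ⟨i', j', t'⟩ := q
    simp only [blockIndices, blockDegree, Finset.mem_product, Finset.mem_univ, Finset.mem_range,
      true_and] at hp hq
    simp only [Prod.mk.injEq, decide_eq_decide] at hpq
    obtain ⟨rfl, htt'⟩ := hpq
    obtain ⟨hjj', rfl⟩ := Nat.eq_and_eq_of_mul_add_eq_mul_add (a := ε - j) (b := ε - j') hl
      (Nat.lt_succ_iff.mp hp.1) (Nat.lt_succ_iff.mp hq.1) htt' (by omega)
    have hj := j.is_le
    have hj' := j'.is_le
    simp only [Prod.mk.injEq, Fin.ext_iff, true_and, and_true]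
    omega
  calc _ ≤ (Finset.univ : Finset (Fin (η + 1) × Bool)).card :=
        Finset.card_le_card_of_injOn _ (fun _ _ => Finset.mem_coe.mpr (Finset.mem_univ _)) hinj
    _ = 2 * (η + 1) := by simp [mul_comm]
end KroneckerBlocks

lemma eq_sum_blocks_of_lamI_sandwich {n d l ε η : ℕ} {A : ℕ → Matrix (Fin n) (Fin n) ℂ}
    {M : ℕ → Matrix (Fin (η + 1) × Fin n) (Fin (ε + 1) × Fin n) ℂ}
    (hM : ∀ x : ℂ, (LamI n η l x)ᵀ * mpEval l M x * LamI n ε l x = mpEval d A x)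
    {s : ℕ} (hs : s ≤ d) :
    A s = ∑ p ∈ blockFiber l ε η s, (M p.2.2).submatrix (Prod.mk p.1) (Prod.mk p.2.1) := by
  ext r c
  rw [Matrix.sum_apply]
  refine Polynomial.coeff_eq_sum_filter_of_forall_eval_eq d (fun k => A k r c) _ _
    (fun p : Fin (η + 1) × Fin (ε + 1) × ℕ => M p.2.2 (p.1, r) (p.2.1, c)) (fun x => ?_) hs
  rw [← lamI_transpose_mul_mpEval_mul_lamI_apply, hM x]
  simp [mpEval, Matrix.sum_apply, mul_comm]

theorem stmt17_general (n d l ε η : ℕ) (hl : 1 ≤ l)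
    (A : ℕ → Matrix (Fin n) (Fin n) ℂ)
    (M : ℕ → Matrix (Fin (η + 1) × Fin n) (Fin (ε + 1) × Fin n) ℂ)
    (hM : ∀ x : ℂ, (LamI n η l x)ᵀ * mpEval l M x * LamI n ε l x = mpEval d A x) :
    ((Finset.range (d + 1)).sup' Finset.nonempty_range_add_one fun i => sNorm (A i)) /
        (2 * max ((ε : ℝ) + 1) ((η : ℝ) + 1)) ≤
      (Finset.range (l + 1)).sup' Finset.nonempty_range_add_one fun i => sNorm (M i) := by
  set μ := (Finset.range (l + 1)).sup' Finset.nonempty_range_add_one fun i => sNorm (M i)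
  have hMμ : ∀ t < l + 1, ‖M t‖ ≤ μ := fun t ht =>
    Finset.le_sup' (fun i => sNorm (M i)) (Finset.mem_range.mpr ht)
  have hμ : 0 ≤ μ := (norm_nonneg _).trans (hMμ 0 l.succ_pos)
  rw [div_le_iff₀ (by positivity)]
  refine Finset.sup'_le _ _ fun s hs => ?_
  calc sNorm (A s)
      = ‖∑ p ∈ blockFiber l ε η s, (M p.2.2).submatrix (Prod.mk p.1) (Prod.mk p.2.1)‖ := by
        rw [← eq_sum_blocks_of_lamI_sandwich hM (Finset.mem_range_succ_iff.mp hs)]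
        rfl
    _ ≤ (blockFiber l ε η s).card * μ := by
        refine (norm_sum_le _ _).trans ?_
        rw [← nsmul_eq_mul]
        refine Finset.sum_le_card_nsmul _ _ _ fun p hp => ?_
        have ht : p.2.2 < l + 1 := by
          simp only [blockFiber, blockIndices, Finset.mem_filter, Finset.mem_product,
            Finset.mem_range] at hp
          exact hp.1.2.2
        exact (Matrix.l2_opNorm_submatrix_le _ (Prod.mk_right_injective _)
          (Prod.mk_right_injective _)).trans (hMμ _ ht)
    _ ≤ (2 * (η + 1) : ℕ) * μ := by
        gcongr
        exact card_blockFiber_le l ε η hl s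
    _ ≤ μ * (2 * max ((ε : ℝ) + 1) ((η : ℝ) + 1)) := by
        push_cast
        nlinarith [le_max_right ((ε : ℝ) + 1) ((η : ℝ) + 1)]

/-- Any degree-at-most-`ℓ` solution `M(λ)` of
`(Λ_η(λ^ℓ)ᵀ ⊗ I_n) M(λ) (Λ_ε(λ^ℓ) ⊗ I_n) = P(λ)` satisfies
`max_i ‖M_i‖₂ ≥ max_i ‖A_i‖₂ / (2 max{ε+1, η+1})`. -/
theorem stmt17 (n d l ε η : ℕ) (hn : 0 < n) (hl : 1 ≤ l) (hd : d = l * (ε + η + 1))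
    (A : ℕ → Matrix (Fin n) (Fin n) ℂ) (hdeg : A d ≠ 0)
    (M : ℕ → Matrix (Fin (η + 1) × Fin n) (Fin (ε + 1) × Fin n) ℂ)
    (hM : ∀ x : ℂ, (LamI n η l x)ᵀ * mpEval l M x * LamI n ε l x = mpEval d A x) :
    ((Finset.range (d + 1)).sup' Finset.nonempty_range_add_one fun i => sNorm (A i)) /
        (2 * max ((ε : ℝ) + 1) ((η : ℝ) + 1)) ≤
      (Finset.range (l + 1)).sup' Finset.nonempty_range_add_one fun i => sNorm (M i) :=
  stmt17_general n d l ε η hl A M hM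

end
end
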